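/- arXiv:1602.08625 — 4 statements merged into one kernel-verified Lean document; each statement's English description precedes it below -/
import Mathlib

section
/- Let R be a Noetherian local ring and let I and J be nonzero proper ideals of R with I = (0 :_R J) and J = (0 :_R I). Then Ext^1_R(R/I, R/I) is isomorphic to Hom_R(Hom_R(R/J, R), R/I). -/
open CategoryTheory Opposite

/-!
Resolve `R ⧸ I` by a projective resolution starting with `R → R ⧸ I`. Its first syzygy is `I`,
and left exactness of `Hom(-, M)` identifies `Ext¹(R ⧸ I, M)` with the cokernel of the
restriction `Hom(R, M) → Hom(I, M)`. For `M = R ⧸ I` this restriction is zero, since every map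
`R → R ⧸ I` kills `I`; hence `Ext¹(R ⧸ I, R ⧸ I) ≅ Hom(I, R ⧸ I)`. Finally
`Hom(R ⧸ J, R) ≅ (0 :_R J) = I`.
-/

universe u

namespace CategoryTheory

open Limits

variable {C : Type*} [Category* C] [Abelian C] [EnoughProjectives C] {X Y : C}

lemma Projective.d_comp_self (f : X ⟶ Y) : Projective.d f ≫ f = 0 :=
  (Category.assoc _ _ _).trans (by rw [kernel.condition]; exact Limits.comp_zero)

namespace ProjectiveResolution

noncomputable def ofEpiComplex (p : X ⟶ Y) : ChainComplex C ℕ :=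
  ChainComplex.mk' X (Projective.syzygies p) (Projective.d p)
    fun f => ⟨_, Projective.d f, Projective.d_comp_self f⟩

lemma ofEpiComplex_d_1_0 (p : X ⟶ Y) : (ofEpiComplex p).d 1 0 = Projective.d p := by
  simp [ofEpiComplex]

instance [Projective X] (p : X ⟶ Y) (n : ℕ) : Projective ((ofEpiComplex p).X n) := by
  obtain (_ | _ | _ | n) := n
  · dsimp [ofEpiComplex]; infer_instance
  all_goals apply Projective.projective_over

lemma ofEpiComplex_exactAt_succ (p : X ⟶ Y) (n : ℕ) : (ofEpiComplex p).ExactAt (n + 1) := by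
  rw [HomologicalComplex.exactAt_iff' _ (n + 1 + 1) (n + 1) n (by simp) (by simp)]
  refine (ShortComplex.exact_iff_of_iso ?_).2 (exact_d_f ((ofEpiComplex p).d (n + 1) n))
  exact ShortComplex.isoMk
    (ChainComplex.mk'XIso _ _ _ _ n : (ofEpiComplex p).X (n + 2) ≅ _) (Iso.refl _) (Iso.refl _)
    ((ChainComplex.mk'_d _ _ _ _ n).symm.trans (Category.comp_id _).symm)
    ((Category.id_comp _).trans (Category.comp_id _).symm)

noncomputable def ofEpi (p : X ⟶ Y) [Projective X] [Epi p] : ProjectiveResolution Y where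
  complex := ofEpiComplex p
  π := (ChainComplex.toSingle₀Equiv _ _).symm ⟨p, by
    rw [ofEpiComplex_d_1_0]; exact Projective.d_comp_self p⟩
  quasiIso := ⟨fun n => by
    cases n
    · rw [ChainComplex.quasiIsoAt₀_iff, ShortComplex.quasiIso_iff_of_zeros' _ rfl rfl rfl]
      refine (ShortComplex.exact_and_epi_g_iff_of_iso ?_).2
        ⟨exact_d_f p, by dsimp; infer_instance⟩
      exact ShortComplex.isoMk (Iso.refl _) (Iso.refl _) (Iso.refl _)
        (by exact (Category.id_comp _).trans ((ofEpiComplex_d_1_0 p).symm.trans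
          (Category.comp_id _).symm))
        (by exact (Category.id_comp _).trans ((ChainComplex.toSingle₀Equiv_symm_apply_f_zero
          (C := ofEpiComplex p) p _).symm.trans (Category.comp_id _).symm))
    · rw [quasiIsoAt_iff_exactAt' _ _ (ChainComplex.exactAt_succ_single_obj _ _)]
      exact ofEpiComplex_exactAt_succ p _⟩

end ProjectiveResolution

end CategoryTheory

namespace Function.Exact

variable {R : Type*} [CommRing R] {P₂ P₁ N : Type*} (M : Type*)
  [AddCommGroup P₂] [AddCommGroup P₁] [AddCommGroup N] [AddCommGroup M]
  [Module R P₂] [Module R P₁] [Module R N] [Module R M]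
  {d₂ : P₂ →ₗ[R] P₁} {d₁ : P₁ →ₗ[R] N}

noncomputable def kerLcompEquiv (h : Function.Exact d₂ d₁) :
    LinearMap.ker (LinearMap.lcomp R M d₂) ≃ₗ[R] (LinearMap.range d₁ →ₗ[R] M) :=
  have hd₁ := d₁.surjective_rangeRestrict
  have hex : Function.Exact (LinearMap.lcomp R M d₁.rangeRestrict) (LinearMap.lcomp R M d₂) :=
    LinearMap.exact_lcomp_of_exact_of_surjective M
      (by simpa [LinearMap.exact_iff] using h) hd₁
  ((LinearEquiv.ofInjective _ (LinearMap.lcomp_injective_of_surjective _ hd₁)).trans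
    (LinearEquiv.ofEq _ _ hex.linearMap_ker_eq.symm)).symm

end Function.Exact

namespace ModuleCat

variable {R : Type*} [CommRing R] {A B : ModuleCat R} (M : ModuleCat R)

noncomputable def kerLeftCompEquiv (d : A ⟶ B) :
    LinearMap.ker (Linear.leftComp R M d) ≃ₗ[R] LinearMap.ker (LinearMap.lcomp R M d.hom) :=
  (LinearEquiv.ofEq _ _ (by ext; exact Hom.ext_iff)).trans (homLinearEquiv.ofSubmodule' _)

end ModuleCat

namespace CategoryTheory.ProjectiveResolution

variable {R : Type u} [CommRing R] {X : ModuleCat.{u} R} (M : ModuleCat.{u} R)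

noncomputable def extOneEquivHomKer (P : ProjectiveResolution X)
    (hM : ∀ f : P.complex.X 0 ⟶ M, LinearMap.ker (P.π.f 0).hom ≤ LinearMap.ker f.hom) :
    ((Ext R (ModuleCat.{u} R) 1).obj (op X)).obj M ≃ₗ[R]
      (LinearMap.ker (P.π.f 0).hom →ₗ[R] M) :=
  let K := P.complex.linearYonedaObj R M
  have hrange := P.exact₀.moduleCat_range_eq_ker
  have hK : K.d 0 1 = 0 := by
    ext f : 2
    exact ModuleCat.hom_ext (LinearMap.ext fun y => hM f (hrange ▸ ⟨y, rfl⟩))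
  have hex : Function.Exact (P.complex.d 2 1).hom (P.complex.d 1 0).hom :=
    LinearMap.exact_iff.2 ((HomologicalComplex.exactAt_iff' _ 2 1 0 (by simp) (by simp)).1
      (P.complex_exactAt_succ 0)).moduleCat_range_eq_ker.symm
  (P.isoExt 1 M ≪≫ (K.isoHomologyπ 0 1 (by simp) hK).symm ≪≫
      K.cyclesIsoSc' 0 1 2 (by simp) (by simp) ≪≫
      (K.sc' 0 1 2).moduleCatCyclesIso).toLinearEquiv ≪≫ₗ
    ModuleCat.kerLeftCompEquiv M (P.complex.d 2 1) ≪≫ₗ hex.kerLcompEquiv M ≪≫ₗ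
    (LinearEquiv.ofEq _ _ hrange).arrowCongr (LinearEquiv.refl R M)

-- `(ofEpi p).π.f 0` is `p` by definition.
noncomputable def extOneEquivHomKerOfEpi {N : ModuleCat.{u} R} [Projective N] (p : N ⟶ X) [Epi p]
    (hM : ∀ f : N ⟶ M, LinearMap.ker p.hom ≤ LinearMap.ker f.hom) :
    ((Ext R (ModuleCat.{u} R) 1).obj (op X)).obj M ≃ₗ[R] (LinearMap.ker p.hom →ₗ[R] M) :=
  (ofEpi p).extOneEquivHomKer M hM

end CategoryTheory.ProjectiveResolution

lemma LinearMap.map_eq_zero_of_mem_annihilator {R M : Type*} [CommRing R] [AddCommGroup M]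
    [Module R M] (f : R →ₗ[R] M) {x : R} (hx : x ∈ Module.annihilator R M) : f x = 0 := by
  rw [← mul_one x, ← smul_eq_mul, map_smul, Module.mem_annihilator.1 hx]

noncomputable def Ideal.dualQuotEquivAnnihilator {R : Type*} [CommRing R] (J : Ideal R) :
    Module.Dual R (R ⧸ J) ≃ₗ[R] J.annihilator :=
  J.dualQuotEquivDualAnnihilator.trans ((LinearMap.ringLmapEquivSelf R R R).ofSubmodules _ _ (by
    ext r
    simp [Submodule.mem_map_equiv, Submodule.mem_dualAnnihilator, Submodule.mem_annihilator,
      mul_comm]))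

theorem ext_one_iso_hom_hom_general
    (R : Type) [CommRing R]
    (I J : Ideal R)
    (hIJ : I = J.annihilator) :
    Nonempty
      ((((Ext R (ModuleCat.{0} R) 1).obj
            (op (ModuleCat.of R (R ⧸ I)))).obj (ModuleCat.of R (R ⧸ I)))
        ≃ₗ[R] (((R ⧸ J) →ₗ[R] R) →ₗ[R] (R ⧸ I))) := by
  have : Projective (ModuleCat.of R R) := (IsProjective.iff_projective _).1 inferInstance
  have : Epi (ModuleCat.ofHom I.mkQ) := (ModuleCat.epi_iff_surjective _).2 I.mkQ_surjective
  have hker : LinearMap.ker I.mkQ = Module.annihilator R (R ⧸ I) := by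
    rw [I.ker_mkQ, Ideal.annihilator_quotient]
  have hM (f : ModuleCat.of R R ⟶ ModuleCat.of R (R ⧸ I)) :
      LinearMap.ker I.mkQ ≤ LinearMap.ker f.hom := fun _ hx =>
    f.hom.map_eq_zero_of_mem_annihilator (hker ▸ hx)
  exact ⟨ProjectiveResolution.extOneEquivHomKerOfEpi _ (ModuleCat.ofHom I.mkQ) hM ≪≫ₗ
    ((LinearEquiv.ofEq _ _ (I.ker_mkQ.trans hIJ)).trans
      J.dualQuotEquivAnnihilator.symm).arrowCongr (.refl R _)⟩

/-- Let `R` be a Noetherian local ring and `I`, `J` nonzero proper ideals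
with `I = (0 :_R J)` and `J = (0 :_R I)`.  Then
`Ext¹_R(R/I, R/I) ≅ Hom_R(Hom_R(R/J, R), R/I)`. -/
theorem ext_one_iso_hom_hom
    (R : Type) [CommRing R] [IsNoetherianRing R] [IsLocalRing R]
    (I J : Ideal R) (hI0 : I ≠ ⊥) (hI1 : I ≠ ⊤) (hJ0 : J ≠ ⊥) (hJ1 : J ≠ ⊤)
    (hIJ : I = J.annihilator) (hJI : J = I.annihilator) :
    Nonempty
      ((((Ext R (ModuleCat.{0} R) 1).obj
            (op (ModuleCat.of R (R ⧸ I)))).obj (ModuleCat.of R (R ⧸ I)))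
        ≃ₗ[R] (((R ⧸ J) →ₗ[R] R) →ₗ[R] (R ⧸ I))) :=
  ext_one_iso_hom_hom_general R I J hIJ
end

section
/- Let R be a Noetherian ring and let I, J be ideals of R with I = (0 :_R J) and J = (0 :_R I). Then the associated primes of R/I and R/J are disjoint if and only if I ∩ J = 0. -/
/-!
If `0 ≠ w ∈ I ∩ J`, then `w` kills both `I = ann J` and `J = ann I`, so some associated prime `q`
of `R` containing `ann w` contains `I` and `J`; unmixedness makes `q` a minimal prime, hence
associated to both `R ⧸ I` and `R ⧸ J`. Conversely, let `p = (I : a)` with `a ∉ I` be associated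
to `R ⧸ I`. If `p` were also associated to `R ⧸ J`, then `J ≤ p`, so `a J ≤ I ∩ J = 0` and
`a ∈ ann J = I`, a contradiction.
-/

variable {R : Type*} [CommRing R]

lemma le_of_mem_associatedPrimes_quotient {K p : Ideal R}
    (hp : p ∈ associatedPrimes R (R ⧸ K)) : K ≤ p := by
  simpa only [Submodule.annihilator_top, Ideal.annihilator_quotient] using hp.annihilator_le

lemma mem_associatedPrimes_quotient_of_mem_minimalPrimes [IsNoetherianRing R] {K q : Ideal R}
    (hq : q ∈ minimalPrimes R) (hK : K ≤ q) : q ∈ associatedPrimes R (R ⧸ K) := by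
  apply Module.associatedPrimes.minimalPrimes_annihilator_subset_associatedPrimes
  rw [Ideal.annihilator_quotient]
  exact ⟨⟨hq.1.1, hK⟩, fun p hp hpq => hq.2 ⟨hp.1, bot_le⟩ hpq⟩

lemma le_colon_singleton_of_mem_annihilator {I : Ideal R} {w : R} (hw : w ∈ I.annihilator) :
    I ≤ (⊥ : Ideal R).colon {w} := fun i hi => by
  rw [Submodule.mem_colon_singleton, Submodule.mem_bot, smul_eq_mul, mul_comm]
  exact Submodule.mem_annihilator.mp hw i hi

lemma not_le_of_mem_associatedPrimes_quotient [IsNoetherianRing R] {I J p : Ideal R}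
    (hJI : J.annihilator ≤ I) (hinf : I ⊓ J = ⊥) (hp : p ∈ associatedPrimes R (R ⧸ I)) :
    ¬ J ≤ p := by
  intro hJp
  obtain ⟨hp, x, rfl⟩ := isAssociatedPrime_iff.mp hp
  obtain ⟨a, rfl⟩ := Ideal.Quotient.mk_surjective x
  have hJa : ∀ j ∈ J, j * a ∈ I := fun j hj => by
    simpa only [Submodule.mem_colon_singleton, Submodule.mem_bot, Algebra.smul_def,
      Ideal.Quotient.algebraMap_eq, ← map_mul, Ideal.Quotient.eq_zero_iff_mem] using hJp hj
  have haI : a ∈ I := hJI <| Submodule.mem_annihilator.mpr fun j hj => by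
    rw [smul_eq_mul, mul_comm, ← Submodule.mem_bot R, ← hinf]
    exact ⟨hJa j hj, J.mul_mem_right a hj⟩
  apply hp.ne_top
  rw [Ideal.eq_top_iff_one, Submodule.mem_colon_singleton, one_smul, Submodule.mem_bot,
    Ideal.Quotient.eq_zero_iff_mem]
  exact haI

/-- Over a Noetherian (unmixed) ring, if `I` and `J` are linked ideals
(`I = (0 :_R J)` and `J = (0 :_R I)`), then `Ass(R/I)` and `Ass(R/J)` are disjoint
iff `I ∩ J = 0`. -/
theorem disjoint_ass_iff_inf_eq_bot
    (R : Type) [CommRing R] [IsNoetherianRing R]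
    (hunmixed : ∀ p ∈ associatedPrimes R R, p ∈ minimalPrimes R)
    (I J : Ideal R) (hIJ : I = J.annihilator) (hJI : J = I.annihilator) :
    associatedPrimes R (R ⧸ I) ∩ associatedPrimes R (R ⧸ J) = ∅ ↔ I ⊓ J = ⊥ := by
  constructor
  · intro hdisj
    by_contra hne
    obtain ⟨w, ⟨hwI, hwJ⟩, hw0⟩ := Submodule.exists_mem_ne_zero_of_ne_bot hne
    obtain ⟨q, hq, hwq⟩ := exists_le_isAssociatedPrime_of_isNoetherianRing R w hw0
    have hqmin := hunmixed q hq
    have hIq : I ≤ q := (le_colon_singleton_of_mem_annihilator (hJI ▸ hwJ)).trans hwq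
    have hJq : J ≤ q := (le_colon_singleton_of_mem_annihilator (hIJ ▸ hwI)).trans hwq
    exact Set.eq_empty_iff_forall_notMem.mp hdisj q
      ⟨mem_associatedPrimes_quotient_of_mem_minimalPrimes hqmin hIq,
        mem_associatedPrimes_quotient_of_mem_minimalPrimes hqmin hJq⟩
  · intro hinf
    refine Set.eq_empty_iff_forall_notMem.mpr fun p ⟨hpI, hpJ⟩ => ?_
    exact not_le_of_mem_associatedPrimes_quotient hIJ.ge hinf hpI
      (le_of_mem_associatedPrimes_quotient hpJ)
end

section
/- Let R be a Noetherian unmixed ring and let I, J be nonzero proper ideals with I = (0 :_R J) and J = (0 :_R I). If Ass_R(R/I) ∩ Ass_R(R/J) = ∅, then the ideal I + J has positive grade, i.e., I + J contains a nonzerodivisor of R. -/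
/-!
If every element of `I ⊔ J` were a zerodivisor, prime avoidance would put `I ⊔ J` inside a
single associated prime `p` of `R`. Unmixedness makes `p` a minimal prime of `R`, hence minimal
over both `I` and `J`, and minimal primes of an ideal are associated to its quotient: so
`p ∈ Ass(R/I) ∩ Ass(R/J)`.
-/

variable {R : Type*} [CommRing R]

theorem Ideal.exists_mem_associatedPrimes_le_of_disjoint_nonZeroDivisors [IsNoetherianRing R]
    {L : Ideal R} (h : Disjoint (L : Set R) (nonZeroDivisors R)) :
    ∃ p ∈ associatedPrimes R R, L ≤ p :=
  (L.subset_union_prime_finite (associatedPrimes.finite R R) (f := id) 0 0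
    fun _ hp _ _ ↦ hp.isPrime).1 <|
    biUnion_associatedPrimes_eq_compl_nonZeroDivisors R ▸ h.subset_compl_right

theorem Ideal.mem_minimalPrimes_of_mem_minimalPrimes_of_le {p L : Ideal R}
    (hp : p ∈ minimalPrimes R) (hL : L ≤ p) : p ∈ L.minimalPrimes :=
  ⟨⟨hp.1.1, hL⟩, fun _ hq hqp ↦ hp.2 ⟨hq.1, bot_le⟩ hqp⟩

theorem Ideal.minimalPrimes_subset_associatedPrimes_quotient [IsNoetherianRing R] (L : Ideal R) :
    L.minimalPrimes ⊆ associatedPrimes R (R ⧸ L) := by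
  simpa only [Ideal.annihilator_quotient] using
    Module.associatedPrimes.minimalPrimes_annihilator_subset_associatedPrimes R (R ⧸ L)

theorem sup_contains_nonZeroDivisor_of_geometrically_linked_general
    (R : Type) [CommRing R] [IsNoetherianRing R]
    (hunmixed : ∀ p ∈ associatedPrimes R R, p ∈ minimalPrimes R)
    (I J : Ideal R)
    (hdisj : associatedPrimes R (R ⧸ I) ∩ associatedPrimes R (R ⧸ J) = ∅) :
    ∃ r ∈ I ⊔ J, r ∈ nonZeroDivisors R := by
  by_contra! h
  obtain ⟨p, hpR, hle⟩ := Ideal.exists_mem_associatedPrimes_le_of_disjoint_nonZeroDivisors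
    (L := I ⊔ J) (Set.disjoint_left.mpr h)
  have hpI : p ∈ associatedPrimes R (R ⧸ I) :=
    I.minimalPrimes_subset_associatedPrimes_quotient <|
      Ideal.mem_minimalPrimes_of_mem_minimalPrimes_of_le (hunmixed p hpR) (le_sup_left.trans hle)
  have hpJ : p ∈ associatedPrimes R (R ⧸ J) :=
    J.minimalPrimes_subset_associatedPrimes_quotient <|
      Ideal.mem_minimalPrimes_of_mem_minimalPrimes_of_le (hunmixed p hpR) (le_sup_right.trans hle)
  exact (hdisj ▸ ⟨hpI, hpJ⟩ : p ∈ (∅ : Set (Ideal R)))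

/-- Over a Noetherian unmixed ring, if nonzero proper ideals `I`, `J` are
linked (`I = (0 :_R J)`, `J = (0 :_R I)`) and `Ass(R/I) ∩ Ass(R/J) = ∅`, then `I + J`
contains a nonzerodivisor of `R` (i.e. has positive grade). -/
theorem sup_contains_nonZeroDivisor_of_geometrically_linked
    (R : Type) [CommRing R] [IsNoetherianRing R]
    (hunmixed : ∀ p ∈ associatedPrimes R R, p ∈ minimalPrimes R)
    (I J : Ideal R) (hI0 : I ≠ ⊥) (hI1 : I ≠ ⊤) (hJ0 : J ≠ ⊥) (hJ1 : J ≠ ⊤)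
    (hIJ : I = J.annihilator) (hJI : J = I.annihilator)
    (hdisj : associatedPrimes R (R ⧸ I) ∩ associatedPrimes R (R ⧸ J) = ∅) :
    ∃ r ∈ I ⊔ J, r ∈ nonZeroDivisors R :=
  sup_contains_nonZeroDivisor_of_geometrically_linked_general R hunmixed I J hdisj
end

section
/- Let (R, m, k) be a Noetherian local ring which is not a field, M a nonzero finitely generated R-module, n ≥ 1 an integer, and suppose λΩ^n M ≅ X ⊕ Y where X is a nonzero finitely generated R-module and Tor_n^R(M, X) = 0. Then X is a nonzero free R-module. -/
/-!
A staircase chase in the double complex `F ⊗ Q`, with `Q` a projective resolution of `X`,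
turns the vanishing of `Tor_n(M, X)` into exactness of
`F_{n+1} ⊗ X → F_n ⊗ X → F_{n-1} ⊗ X`. For finite free `F_i` this complex is
`Hom(F_i^*, X)`, so every map `λΩⁿM = im (d_n^*) → X` extends to `F_{n+1}^* → X`.
Extending the projection onto `X` makes `X` a direct summand of the free module `F_{n+1}^*`,
and a finitely presented projective module over a local ring is free.
-/

open TensorProduct LinearMap

section TensorDiagram

variable {R : Type*} [CommRing R]
  {A₀ A₁ A₂ C₀ C₁ C₂ N : Type*} [AddCommGroup A₀] [AddCommGroup A₁] [AddCommGroup A₂]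
  [AddCommGroup C₀] [AddCommGroup C₁] [AddCommGroup C₂] [AddCommGroup N]
  [Module R A₀] [Module R A₁] [Module R A₂] [Module R C₀] [Module R C₁] [Module R C₂]
  [Module R N]

theorem LinearMap.lTensor_rTensor_comm (f : A₁ →ₗ[R] A₀) (g : C₁ →ₗ[R] C₀) (z : A₁ ⊗[R] C₁) :
    g.lTensor A₀ (f.rTensor C₁ z) = f.rTensor C₀ (g.lTensor A₁ z) := by
  rw [← LinearMap.comp_apply, ← LinearMap.comp_apply, lTensor_comp_rTensor, rTensor_comp_lTensor]

theorem mem_range_rTensor_sup_of_lTensor_eq_rTensor {f₁ : A₂ →ₗ[R] A₁} {f₀ : A₁ →ₗ[R] A₀}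
    {g₁ : C₂ →ₗ[R] C₁} {g₀ : C₁ →ₗ[R] C₀}
    (hf : Function.Exact (f₁.rTensor C₀) (f₀.rTensor C₀)) (hg : g₀ ∘ₗ g₁ = 0)
    {z : A₁ ⊗[R] C₀} {w : A₀ ⊗[R] C₁} (hzw : g₀.lTensor A₀ w = f₀.rTensor C₀ z)
    (hw : w ∈ range (f₀.rTensor C₁) ⊔ range (g₁.lTensor A₀)) :
    z ∈ range (f₁.rTensor C₀) ⊔ range (g₀.lTensor A₁) := by
  obtain ⟨_, ⟨a, rfl⟩, _, ⟨b, rfl⟩, rfl⟩ := Submodule.mem_sup.mp hw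
  have hgg : g₀.lTensor A₀ (g₁.lTensor A₀ b) = 0 := by
    rw [← lTensor_comp_apply, hg, lTensor_zero, LinearMap.zero_apply]
  obtain ⟨c, hc⟩ := (hf (z - g₀.lTensor A₁ a)).mp <| by
    rw [map_sub, ← hzw, map_add, hgg, add_zero, lTensor_rTensor_comm, sub_self]
  exact Submodule.mem_sup.mpr ⟨_, ⟨c, rfl⟩, _, ⟨a, rfl⟩, by rw [hc, sub_add_cancel]⟩

theorem mem_range_rTensor_sup_of_rTensor_mem_range_lTensor {f₁ : A₁ →ₗ[R] A₀}
    {f₀ : A₀ →ₗ[R] N} (hf : Function.Exact f₁ f₀) (hf₀ : Function.Surjective f₀)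
    (g : C₁ →ₗ[R] C₀) {w : A₀ ⊗[R] C₀} (hw : f₀.rTensor C₀ w ∈ range (g.lTensor N)) :
    w ∈ range (f₁.rTensor C₀) ⊔ range (g.lTensor A₀) := by
  obtain ⟨v, hv⟩ := hw
  obtain ⟨y, rfl⟩ := rTensor_surjective C₁ hf₀ v
  obtain ⟨c, hc⟩ := (rTensor_exact C₀ hf hf₀ (w - g.lTensor A₀ y)).mp <| by
    rw [map_sub, ← hv, lTensor_rTensor_comm, sub_self]
  exact Submodule.mem_sup.mpr ⟨_, ⟨c, rfl⟩, _, ⟨y, rfl⟩, by rw [hc, sub_add_cancel]⟩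

theorem lTensor_mem_range_rTensor_of_mem_sup {f : A₁ →ₗ[R] A₀} {g : C₁ →ₗ[R] C₀}
    {h : C₀ →ₗ[R] N} (hg : h ∘ₗ g = 0) {z : A₀ ⊗[R] C₀}
    (hz : z ∈ range (f.rTensor C₀) ⊔ range (g.lTensor A₀)) :
    h.lTensor A₀ z ∈ range (f.rTensor N) := by
  obtain ⟨_, ⟨a, rfl⟩, _, ⟨b, rfl⟩, rfl⟩ := Submodule.mem_sup.mp hz
  refine ⟨h.lTensor A₁ a, ?_⟩
  rw [map_add, ← lTensor_comp_apply, hg, lTensor_zero, LinearMap.zero_apply,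
    add_zero, lTensor_rTensor_comm]

end TensorDiagram

section Staircase

variable {R : Type*} [CommRing R] {M X : Type*} [AddCommGroup M] [Module R M]
  [AddCommGroup X] [Module R X]
  {F Q : ℕ → Type*} [∀ i, AddCommGroup (F i)] [∀ i, Module R (F i)] [∀ i, Module.Flat R (F i)]
  [∀ j, AddCommGroup (Q j)] [∀ j, Module R (Q j)] [∀ j, Module.Flat R (Q j)]
  {d : ∀ i, F (i + 1) →ₗ[R] F i} {ε : F 0 →ₗ[R] M}
  {δ : ∀ j, Q (j + 1) →ₗ[R] Q j} {η : Q 0 →ₗ[R] X}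

theorem mem_range_rTensor_sup_range_lTensor_of_exact_lTensor (hε : Function.Surjective ε)
    (hε₀ : Function.Exact (d 0) ε) (hd : ∀ i, Function.Exact (d (i + 1)) (d i))
    (hδ : ∀ j, Function.Exact (δ (j + 1)) (δ j)) {m : ℕ}
    (hM : Function.Exact ((δ (m + 1)).lTensor M) ((δ m).lTensor M)) :
    ∀ p k, p + k = m → ∀ z : F (p + 1) ⊗[R] Q k,
      (d p).rTensor (Q k) z ∈ range ((δ k).lTensor (F p)) →
      z ∈ range ((d (p + 1)).rTensor (Q k)) ⊔ range ((δ k).lTensor (F (p + 1))) := by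
  intro p
  induction p with
  | zero =>
    intro k hk z ⟨w, hw⟩
    obtain rfl : k = m := by omega
    have hεw : ε.rTensor (Q (k + 1)) w ∈ range ((δ (k + 1)).lTensor M) := by
      refine LinearMap.mem_range.mpr ((hM _).mp ?_)
      rw [lTensor_rTensor_comm, hw, ← rTensor_comp_apply, hε₀.linearMap_comp_eq_zero,
        rTensor_zero, LinearMap.zero_apply]
    exact mem_range_rTensor_sup_of_lTensor_eq_rTensor (Module.Flat.rTensor_exact _ (hd 0))
      (hδ k).linearMap_comp_eq_zero hw
      (mem_range_rTensor_sup_of_rTensor_mem_range_lTensor hε₀ hε _ hεw)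
  | succ p ih =>
    rintro k hk z ⟨w, hw⟩
    have hdw : (d p).rTensor (Q (k + 1)) w ∈ range ((δ (k + 1)).lTensor (F p)) := by
      refine LinearMap.mem_range.mpr ((Module.Flat.lTensor_exact _ (hδ k) _).mp ?_)
      rw [lTensor_rTensor_comm, hw, ← rTensor_comp_apply, (hd p).linearMap_comp_eq_zero,
        rTensor_zero, LinearMap.zero_apply]
    exact mem_range_rTensor_sup_of_lTensor_eq_rTensor (Module.Flat.rTensor_exact _ (hd (p + 1)))
      (hδ k).linearMap_comp_eq_zero hw (ih (k + 1) (by omega) w hdw)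

theorem exact_rTensor_of_exact_lTensor (hε : Function.Surjective ε)
    (hε₀ : Function.Exact (d 0) ε) (hd : ∀ i, Function.Exact (d (i + 1)) (d i))
    (hη : Function.Surjective η) (hη₀ : Function.Exact (δ 0) η)
    (hδ : ∀ j, Function.Exact (δ (j + 1)) (δ j)) {m : ℕ}
    (hM : Function.Exact ((δ (m + 1)).lTensor M) ((δ m).lTensor M)) :
    Function.Exact ((d (m + 1)).rTensor X) ((d m).rTensor X) := by
  refine fun u => ⟨fun hu => ?_, ?_⟩
  · obtain ⟨z, rfl⟩ := lTensor_surjective (F (m + 1)) hη u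
    have hdz : (d m).rTensor (Q 0) z ∈ range ((δ 0).lTensor (F m)) := by
      refine LinearMap.mem_range.mpr ((Module.Flat.lTensor_exact _ hη₀ _).mp ?_)
      rw [lTensor_rTensor_comm, hu]
    exact lTensor_mem_range_rTensor_of_mem_sup hη₀.linearMap_comp_eq_zero
      (mem_range_rTensor_sup_range_lTensor_of_exact_lTensor hε hε₀ hd hδ hM m 0 rfl z hdz)
  · rintro ⟨t, rfl⟩
    rw [← rTensor_comp_apply, (hd m).linearMap_comp_eq_zero, rTensor_zero, LinearMap.zero_apply]

end Staircase

universe u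

namespace CategoryTheory.ProjectiveResolution

variable {R : Type u} [CommRing R]

theorem exact_lTensor_of_subsingleton_tor {M X : ModuleCat.{u} R} (P : ProjectiveResolution X)
    {m : ℕ} (h : Subsingleton (((Tor (ModuleCat.{u} R) (m + 1)).obj M).obj X)) :
    Function.Exact ((P.complex.d (m + 2) (m + 1)).hom.lTensor M)
      ((P.complex.d (m + 1) m).hom.lTensor M) := by
  let T := (MonoidalCategory.tensoringLeft (ModuleCat.{u} R)).obj M
  let K := (T.mapHomologicalComplex (ComplexShape.down ℕ)).obj P.complex
  have hK : K.ExactAt (m + 1) := by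
    rw [HomologicalComplex.exactAt_iff_isZero_homology]
    exact (@ModuleCat.isZero_of_subsingleton _ _ _ h).of_iso (P.isoLeftDerivedObj T (m + 1)).symm
  have hS := (HomologicalComplex.exactAt_iff' K (m + 2) (m + 1) m
    (by simp [ChainComplex.prev]) (by simp [ChainComplex.next_nat_succ])).1 hK
  exact LinearMap.exact_iff.mpr ((ShortComplex.moduleCat_exact_iff_range_eq_ker _).mp hS).symm

theorem exists_surjective_exact {X : Type u} [AddCommGroup X] [Module R X]
    (P : ProjectiveResolution (ModuleCat.of R X)) :
    ∃ η : P.complex.X 0 →ₗ[R] X, Function.Surjective η ∧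
      Function.Exact (P.complex.d 1 0).hom η := by
  let ν := (HomologicalComplex.singleObjXSelf (ComplexShape.down ℕ) 0
    (ModuleCat.of R X)).toLinearEquiv
  refine ⟨ν.toLinearMap ∘ₗ (P.π.f 0).hom,
    ν.surjective.comp ((ModuleCat.epi_iff_surjective _).mp inferInstance), ?_⟩
  rw [LinearMap.exact_iff, LinearMap.ker_comp, LinearMap.ker_eq_bot.mpr ν.injective,
    Submodule.comap_bot]
  exact ((ShortComplex.moduleCat_exact_iff_range_eq_ker _).mp P.exact₀).symm

theorem exact_d_succ {X : ModuleCat.{u} R} (P : ProjectiveResolution X) (j : ℕ) :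
    Function.Exact (P.complex.d (j + 2) (j + 1)).hom (P.complex.d (j + 1) j).hom :=
  LinearMap.exact_iff.mpr ((ShortComplex.moduleCat_exact_iff_range_eq_ker _).mp
    (P.exact_succ j)).symm

end CategoryTheory.ProjectiveResolution

section DualHom

variable {R : Type*} [CommRing R] {A B C X : Type*} [AddCommGroup A] [Module R A]
  [Module.Finite R A] [Module.Free R A] [AddCommGroup B] [Module R B] [Module.Finite R B]
  [Module.Free R B] [AddCommGroup C] [Module R C] [Module.Finite R C] [Module.Free R C]
  [AddCommGroup X] [Module R X]

variable (R A X) in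
noncomputable def tensorEquivDualHom : A ⊗[R] X ≃ₗ[R] (Module.Dual R A →ₗ[R] X) :=
  (TensorProduct.congr (Module.evalEquiv R A) (LinearEquiv.refl R X)).trans
    (dualTensorHomEquiv R (Module.Dual R A) X)

theorem tensorEquivDualHom_tmul (a : A) (x : X) (f : Module.Dual R A) :
    tensorEquivDualHom R A X (a ⊗ₜ x) f = f a • x := by
  simp [tensorEquivDualHom, Module.evalEquiv_apply]

theorem tensorEquivDualHom_rTensor (g : A →ₗ[R] B) (t : A ⊗[R] X) (f : Module.Dual R B) :
    tensorEquivDualHom R B X (g.rTensor X t) f = tensorEquivDualHom R A X t (g.dualMap f) := by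
  induction t with
  | zero => simp
  | tmul a x => simp [tensorEquivDualHom_tmul]
  | add s t hs ht => simp only [map_add, LinearMap.add_apply, hs, ht]

theorem exists_comp_subtype_range_dualMap_eq {f : A →ₗ[R] B} {g : B →ₗ[R] C}
    (hgf : g ∘ₗ f = 0) (hX : Function.Exact (f.rTensor X) (g.rTensor X))
    (π : range f.dualMap →ₗ[R] X) :
    ∃ φ : Module.Dual R A →ₗ[R] X, φ ∘ₗ (range f.dualMap).subtype = π := by
  let u := (tensorEquivDualHom R B X).symm (π ∘ₗ f.dualMap.rangeRestrict)
  have hu : tensorEquivDualHom R B X u = π ∘ₗ f.dualMap.rangeRestrict :=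
    LinearEquiv.apply_symm_apply _ _
  have hgu : g.rTensor X u = 0 := by
    refine (tensorEquivDualHom R C X).map_eq_zero_iff.mp (LinearMap.ext fun ξ => ?_)
    have hfg : f.dualMap.rangeRestrict (g.dualMap ξ) = 0 := by
      refine Subtype.ext ?_
      change (ξ ∘ₗ g) ∘ₗ f = 0
      rw [LinearMap.comp_assoc, hgf, LinearMap.comp_zero]
    rw [tensorEquivDualHom_rTensor, hu, LinearMap.comp_apply, hfg, map_zero,
      LinearMap.zero_apply]
  obtain ⟨t, ht⟩ := (hX u).mp hgu
  refine ⟨tensorEquivDualHom R A X t, LinearMap.ext fun ⟨_, ξ, rfl⟩ => ?_⟩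
  rw [LinearMap.comp_apply, Submodule.subtype_apply, ← tensorEquivDualHom_rTensor, ht, hu]
  rfl

end DualHom

open CategoryTheory IsLocalRing

theorem summand_free_of_tor_vanishes_general
    (R : Type) [CommRing R] [IsNoetherianRing R] [IsLocalRing R]
    (M : Type) [AddCommGroup M] [Module R M]
    -- a minimal free resolution of M
    (F : ℕ → Type) [∀ i, AddCommGroup (F i)] [∀ i, Module R (F i)]
    [∀ i, Module.Finite R (F i)] [∀ i, Module.Free R (F i)]
    (d : ∀ i, F (i + 1) →ₗ[R] F i) (ε : F 0 →ₗ[R] M)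
    (hε : Function.Surjective ε)
    (h0 : LinearMap.range (d 0) = LinearMap.ker ε)
    (hexact : ∀ i, LinearMap.range (d (i + 1)) = LinearMap.ker (d i))
    (n : ℕ) (hn : 1 ≤ n)
    -- λΩⁿM ≅ X ⊕ Y with X nonzero
    (X Y : Type) [AddCommGroup X] [Module R X] [Module.Finite R X] [Nontrivial X]
    [AddCommGroup Y] [Module R Y]
    (e : (LinearMap.range ((d n).dualMap) : Submodule R (Module.Dual R (F (n + 1))))
      ≃ₗ[R] X × Y)
    -- Tor_n(M, X) = 0
    (htor : Subsingleton
      (((Tor (ModuleCat.{0} R) n).obj (ModuleCat.of R M)).obj (ModuleCat.of R X))) :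
    Module.Free R X ∧ Nontrivial X := by
  obtain ⟨m, rfl⟩ : ∃ m, n = m + 1 := ⟨n - 1, by omega⟩
  obtain ⟨P⟩ := HasProjectiveResolution.out (Z := ModuleCat.of R X)
  obtain ⟨η, hη, hη₀⟩ := P.exists_surjective_exact
  have hd (i : ℕ) : Function.Exact (d (i + 1)) (d i) := LinearMap.exact_iff.mpr (hexact i).symm
  have hFX := exact_rTensor_of_exact_lTensor (Q := fun j => P.complex.X j)
    (δ := fun j => (P.complex.d (j + 1) j).hom) hε (LinearMap.exact_iff.mpr h0.symm) hd hη hη₀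
    P.exact_d_succ (P.exact_lTensor_of_subsingleton_tor htor)
  obtain ⟨φ, hφ⟩ := exists_comp_subtype_range_dualMap_eq (hd m).linearMap_comp_eq_zero hFX
    (LinearMap.fst R X Y ∘ₗ e.toLinearMap)
  have : Module.Projective R X := .of_split
    ((LinearMap.range _).subtype ∘ₗ e.symm.toLinearMap ∘ₗ LinearMap.inl R X Y) φ <| by
      ext x
      simp [← LinearMap.comp_assoc, hφ]
  have := Module.finitePresentation_of_finite R X
  exact ⟨Module.free_of_flat_of_isLocalRing, inferInstance⟩

/-- Let `(R, m, k)` be a Noetherian local ring which is not a field,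
`M` a nonzero finitely generated `R`-module with minimal free resolution `(F_•, d_•, ε)`,
`n ≥ 1`, and suppose `λΩⁿM = Ω Tr ΩⁿM = im((d n)* : Fₙ* → F_{n+1}*) ≅ X ⊕ Y` with `X`
nonzero and `Tor_n^R(M, X) = 0`.  Then `X` is a nonzero free `R`-module. -/
theorem summand_free_of_tor_vanishes
    (R : Type) [CommRing R] [IsNoetherianRing R] [IsLocalRing R] (hR : ¬ IsField R)
    (M : Type) [AddCommGroup M] [Module R M] [Module.Finite R M] [Nontrivial M]
    -- a minimal free resolution of M
    (F : ℕ → Type) [∀ i, AddCommGroup (F i)] [∀ i, Module R (F i)]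
    [∀ i, Module.Finite R (F i)] [∀ i, Module.Free R (F i)]
    (d : ∀ i, F (i + 1) →ₗ[R] F i) (ε : F 0 →ₗ[R] M)
    (hε : Function.Surjective ε)
    (h0 : LinearMap.range (d 0) = LinearMap.ker ε)
    (hexact : ∀ i, LinearMap.range (d (i + 1)) = LinearMap.ker (d i))
    (hmin : ∀ i, LinearMap.range (d i) ≤ (maximalIdeal R) • (⊤ : Submodule R (F i)))
    (n : ℕ) (hn : 1 ≤ n)
    -- λΩⁿM ≅ X ⊕ Y with X nonzero
    (X Y : Type) [AddCommGroup X] [Module R X] [Module.Finite R X] [Nontrivial X]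
    [AddCommGroup Y] [Module R Y] [Module.Finite R Y]
    (e : (LinearMap.range ((d n).dualMap) : Submodule R (Module.Dual R (F (n + 1))))
      ≃ₗ[R] X × Y)
    -- Tor_n(M, X) = 0
    (htor : Subsingleton
      (((Tor (ModuleCat.{0} R) n).obj (ModuleCat.of R M)).obj (ModuleCat.of R X))) :
    Module.Free R X ∧ Nontrivial X :=
  summand_free_of_tor_vanishes_general R M F d ε hε h0 hexact n hn X Y e htor
end
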